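/- Let u₀ ∈ L^∞(ℝ) be C¹ on ℝ \ {0} with lim_{|x|→∞} |x·u₀'(x)| = 0, and suppose (α, β) ∈ ℝ² is an accumulation point of {(u₀(−λ), u₀(λ))}_{λ>0} as λ → ∞, i.e., there is a sequence λₙ → ∞ with u₀(−λₙ) → α and u₀(λₙ) → β. Then with tₙ = λₙ², the rescaled heat solutions x ↦ u(√(tₙ)·x, tₙ) converge uniformly on compact subsets of ℝ to x ↦ α·F(−x) + β·F(x), where F(z) = (1/(2√π)) ∫_{−∞}^z e^{−y²/4} dy. -/

import Mathlib

/-!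
Substituting `y = λ z` turns `u(λ x, λ²)` into the Gaussian average
`(1/(2√π)) ∫ exp (-(x - z)²/4) u₀(λ z) dz`, and `α F(-x) + β F(x)` is the same average of the
step function equal to `α` on `z < 0` and `β` on `z ≥ 0`. By the mean value theorem, once
`|s u₀'(s)| ≤ η` for `|s| ≥ λ min(1, |z|)`, we get `|u₀(λ z) - u₀(± λ)| ≤ η |z ∓ 1| / min(1, |z|)`,
so `u₀(λₙ z)` tends to the step function at every `z ≠ 0`. For `|x| ≤ R` the kernel is dominated
by `exp (R²/4) exp (-z²/8)`, so dominated convergence bounds the error uniformly on compact sets.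
-/

open Filter Real MeasureTheory Set Topology

lemma abs_sub_le_of_abs_mul_deriv_le {f : ℝ → ℝ} {a b m ε : ℝ} (hm : 0 < m)
    (hf : DifferentiableOn ℝ f {0}ᶜ) (h : ∀ s ∈ uIcc a b, m ≤ |s| ∧ |s * deriv f s| ≤ ε) :
    |f b - f a| ≤ ε / m * |b - a| := by
  have hne : ∀ s ∈ uIcc a b, s ≠ 0 := fun s hs => abs_pos.1 (hm.trans_le (h s hs).1)
  refine (convex_uIcc a b).norm_image_sub_le_of_norm_deriv_le
    (fun s hs => hf.differentiableAt (isOpen_compl_singleton.mem_nhds (hne s hs)))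
    (fun s hs => ?_) left_mem_uIcc right_mem_uIcc
  obtain ⟨hms, hε⟩ := h s hs
  rw [Real.norm_eq_abs, le_div_iff₀ hm]
  calc |deriv f s| * m ≤ |deriv f s| * |s| := by gcongr
    _ = |s * deriv f s| := by rw [abs_mul, mul_comm]
    _ ≤ ε := hε

lemma min_abs_le_abs_of_mem_uIcc {a b s : ℝ} (hab : 0 < a * b) (hs : s ∈ uIcc a b) :
    min |a| |b| ≤ |s| := by
  rcases pos_and_pos_or_neg_and_neg_of_mul_pos hab with ⟨ha, hb⟩ | ⟨ha, hb⟩ <;>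
    rcases mem_uIcc.1 hs with ⟨h1, h2⟩ | ⟨h1, h2⟩ <;>
    simp only [min_le_iff, le_abs] <;> grind

lemma tendsto_integral_mul_abs_of_tendsto_zero {X : Type*} [MeasurableSpace X] {μ : Measure X}
    {w : X → ℝ} (hw : Integrable w μ) {v : ℕ → X → ℝ} {B : ℝ}
    (hv : ∀ n, AEStronglyMeasurable (v n) μ) (hB : ∀ n x, |v n x| ≤ B)
    (hlim : ∀ᵐ x ∂μ, Tendsto (fun n => v n x) atTop (𝓝 0)) :
    Tendsto (fun n => ∫ x, w x * |v n x| ∂μ) atTop (𝓝 0) := by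
  have h := tendsto_integral_of_dominated_convergence (F := fun n x => w x * |v n x|)
    (fun x => ‖w x‖ * B) (fun n => hw.aestronglyMeasurable.mul (hv n).norm) (hw.norm.mul_const B)
    (fun n => Eventually.of_forall fun x => by
      rw [norm_mul, norm_abs_eq_norm]; exact mul_le_mul_of_nonneg_left (hB n x) (norm_nonneg _))
    (hlim.mono fun x hx => (tendsto_const_nhds (x := w x)).mul hx.abs)
  simpa using h

lemma tendstoUniformlyOn_of_eventually_dist_le {ι X Y : Type*} [PseudoMetricSpace Y]
    {F : ι → X → Y} {f : X → Y} {p : Filter ι} {s : Set X} {a : ι → ℝ}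
    (ha : Tendsto a p (𝓝 0)) (h : ∀ᶠ n in p, ∀ x ∈ s, dist (f x) (F n x) ≤ a n) :
    TendstoUniformlyOn F f p s :=
  Metric.tendstoUniformlyOn_iff.2 fun _ hε =>
    (h.and (ha.eventually (gt_mem_nhds hε))).mono fun _ hn x hx => (hn.1 x hx).trans_lt hn.2

lemma setIntegral_Iio_comp_sub_right {E : Type*} [NormedAddCommGroup E] [NormedSpace ℝ E]
    (g : ℝ → E) (a x : ℝ) :
    ∫ z in Iio a, g (z - x) = ∫ y in Iio (a - x), g y := by
  have h := (measurePreserving_sub_right volume x).setIntegral_preimage_emb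
    (measurableEmbedding_subRight x) g (Iio (a - x))
  rwa [preimage_sub_const_Iio, sub_add_cancel] at h

lemma setIntegral_Ici_comp_sub_left {E : Type*} [NormedAddCommGroup E] [NormedSpace ℝ E]
    (g : ℝ → E) (a x : ℝ) :
    ∫ z in Ici a, g (x - z) = ∫ y in Iic (x - a), g y := by
  have h := (Measure.measurePreserving_sub_left volume x).setIntegral_preimage_emb
    (measurableEmbedding_subLeft x) g (Iic (x - a))
  rwa [preimage_const_sub_Iic, sub_sub_cancel] at h

lemma zero_lt_min_abs_of_mul_pos {a b : ℝ} (h : 0 < a * b) : 0 < min |a| |b| :=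
  lt_min (abs_pos.2 (left_ne_zero_of_mul h.ne')) (abs_pos.2 (right_ne_zero_of_mul h.ne'))

lemma abs_sub_comp_mul_le {f : ℝ → ℝ} (hf : DifferentiableOn ℝ f {0}ᶜ) {a z l η : ℝ}
    (hl : 0 < l) (haz : 0 < a * z)
    (H : ∀ s, l * min |a| |z| ≤ |s| → |s * deriv f s| ≤ η) :
    |f (l * z) - f (l * a)| ≤ η / min |a| |z| * |z - a| := by
  have hm := zero_lt_min_abs_of_mul_pos haz
  have hmin : min |l * a| |l * z| = l * min |a| |z| := by
    rw [abs_mul, abs_mul, abs_of_pos hl, mul_min_of_nonneg _ _ hl.le]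
  have key := abs_sub_le_of_abs_mul_deriv_le (mul_pos hl hm) hf (a := l * a) (b := l * z)
    (ε := η) fun s hs => by
      have := min_abs_le_abs_of_mem_uIcc (by nlinarith [mul_pos (mul_pos hl hl) haz]) hs
      rw [hmin] at this
      exact ⟨this, H s this⟩
  calc |f (l * z) - f (l * a)| ≤ η / (l * min |a| |z|) * |l * z - l * a| := key
    _ = η / min |a| |z| * |z - a| := by
      rw [← mul_sub, abs_mul, abs_of_pos hl]; field_simp

lemma tendsto_sub_comp_mul_of_mul_pos {f : ℝ → ℝ} (hf : DifferentiableOn ℝ f {0}ᶜ)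
    (hosc : Tendsto (fun x => |x * deriv f x|) (cocompact ℝ) (𝓝 0))
    {lam : ℕ → ℝ} (hlam : Tendsto lam atTop atTop) {a z : ℝ} (haz : 0 < a * z) :
    Tendsto (fun n => f (lam n * z) - f (lam n * a)) atTop (𝓝 0) := by
  set m := min |a| |z|
  have hm : 0 < m := zero_lt_min_abs_of_mul_pos haz
  rw [Metric.tendsto_nhds]
  intro ε hε
  set η := ε * m / (|z - a| + 1)
  have hη : 0 < η := by positivity
  obtain ⟨A, hA⟩ : ∃ A, ∀ s : ℝ, A ≤ |s| → |s * deriv f s| < η := by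
    have := hosc.eventually (gt_mem_nhds hη)
    rw [← Metric.cobounded_eq_cocompact, ← comap_norm_atTop, eventually_comap,
      eventually_atTop] at this
    obtain ⟨A, hA⟩ := this
    exact ⟨A, fun s hs => hA _ hs s rfl⟩
  filter_upwards [hlam.eventually_gt_atTop 0, hlam.eventually_ge_atTop (A / m)] with n hn hnA
  have hAm : A ≤ lam n * m := by rwa [div_le_iff₀ hm] at hnA
  rw [Real.dist_eq, sub_zero]
  calc |f (lam n * z) - f (lam n * a)| ≤ η / m * |z - a| :=
        abs_sub_comp_mul_le hf hn haz fun s hs => (hA s (hAm.trans hs)).le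
    _ < ε := by
      rw [div_mul_eq_mul_div, div_lt_iff₀ hm, div_mul_eq_mul_div, div_lt_iff₀ (by positivity)]
      nlinarith [abs_nonneg (z - a)]

noncomputable def stepFun (α β : ℝ) (z : ℝ) : ℝ := if z < 0 then α else β

lemma measurable_stepFun (α β : ℝ) : Measurable (stepFun α β) :=
  Measurable.ite measurableSet_Iio measurable_const measurable_const

lemma abs_stepFun_le (α β z : ℝ) : |stepFun α β z| ≤ max |α| |β| := by
  unfold stepFun; split_ifs
  exacts [le_max_left _ _, le_max_right _ _]

lemma tendsto_comp_mul_stepFun {f : ℝ → ℝ} (hf : DifferentiableOn ℝ f {0}ᶜ)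
    (hosc : Tendsto (fun x => |x * deriv f x|) (cocompact ℝ) (𝓝 0))
    {lam : ℕ → ℝ} (hlam : Tendsto lam atTop atTop) {α β : ℝ}
    (hα : Tendsto (fun n => f (-(lam n))) atTop (𝓝 α))
    (hβ : Tendsto (fun n => f (lam n)) atTop (𝓝 β)) {z : ℝ} (hz : z ≠ 0) :
    Tendsto (fun n => f (lam n * z)) atTop (𝓝 (stepFun α β z)) := by
  rcases hz.lt_or_gt with hz | hz
  · have h := (tendsto_sub_comp_mul_of_mul_pos hf hosc hlam (a := -1) (by linarith)).add hα
    simpa [stepFun, hz] using h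
  · have h := (tendsto_sub_comp_mul_of_mul_pos hf hosc hlam (a := 1) (by linarith)).add hβ
    simpa [stepFun, hz.not_gt] using h

lemma exp_neg_sq_sub_div_four_le {x R : ℝ} (hx : |x| ≤ R) (z : ℝ) :
    exp (-(x - z) ^ 2 / 4) ≤ exp (R ^ 2 / 4) * exp (-(1 / 8) * z ^ 2) := by
  rw [← exp_add, exp_le_exp]
  have : x ^ 2 ≤ R ^ 2 := by simpa only [sq_abs] using pow_le_pow_left₀ (abs_nonneg x) hx 2
  nlinarith [sq_nonneg (2 * x - z)]

lemma integrable_exp_neg_sq_sub_div_four (x : ℝ) :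
    Integrable fun z => exp (-(x - z) ^ 2 / 4) := by
  have h := (integrable_exp_neg_mul_sq (b := 1 / 4) (by norm_num)).comp_sub_left x
  refine h.congr (Eventually.of_forall fun z => ?_)
  simp only
  ring_nf

lemma abs_integral_exp_neg_sq_sub_mul_le {v : ℝ → ℝ} {B : ℝ} (hv : AEStronglyMeasurable v)
    (hB : ∀ z, |v z| ≤ B) {x R : ℝ} (hx : |x| ≤ R) :
    |∫ z, exp (-(x - z) ^ 2 / 4) * v z|
      ≤ exp (R ^ 2 / 4) * ∫ z, exp (-(1 / 8) * z ^ 2) * |v z| := by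
  rw [← integral_const_mul (exp (R ^ 2 / 4)) fun z => exp (-(1 / 8) * z ^ 2) * |v z|,
    ← Real.norm_eq_abs]
  refine norm_integral_le_of_norm_le (Integrable.const_mul ?_ _)
    (Eventually.of_forall fun z => ?_)
  · exact (integrable_exp_neg_mul_sq (by norm_num)).mul_bdd hv.norm
      (Eventually.of_forall fun z => by simpa using hB z)
  · rw [norm_mul, Real.norm_of_nonneg (exp_pos _).le, Real.norm_eq_abs, ← mul_assoc]
    exact mul_le_mul_of_nonneg_right (exp_neg_sq_sub_div_four_le hx z) (abs_nonneg _)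

lemma integral_heat_rescale (u₀ : ℝ → ℝ) {l : ℝ} (hl : 0 < l) (x : ℝ) :
    1 / (2 * √(π * l ^ 2)) * ∫ y, exp (-(l * x - y) ^ 2 / (4 * l ^ 2)) * u₀ y
      = 1 / (2 * √π) * ∫ z, exp (-(x - z) ^ 2 / 4) * u₀ (l * z) := by
  have hsubst : ∫ z, exp (-(x - z) ^ 2 / 4) * u₀ (l * z)
      = l⁻¹ * ∫ y, exp (-(l * x - y) ^ 2 / (4 * l ^ 2)) * u₀ y := by
    rw [← abs_of_pos (inv_pos.2 hl), ← smul_eq_mul,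
      ← Measure.integral_comp_mul_left (fun y => exp (-(l * x - y) ^ 2 / (4 * l ^ 2)) * u₀ y)]
    congr with z
    field_simp
  rw [hsubst, sqrt_mul pi_pos.le, sqrt_sq hl.le]
  field_simp

lemma integral_exp_neg_sq_sub_mul_stepFun (α β x : ℝ) :
    ∫ z, exp (-(x - z) ^ 2 / 4) * stepFun α β z
      = α * (∫ y in Iio (-x), exp (-y ^ 2 / 4)) + β * ∫ y in Iio x, exp (-y ^ 2 / 4) := by
  have hint : Integrable fun z => exp (-(x - z) ^ 2 / 4) * stepFun α β z :=
    (integrable_exp_neg_sq_sub_div_four x).mul_bdd (measurable_stepFun α β).aestronglyMeasurable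
      (Eventually.of_forall fun z => abs_stepFun_le α β z)
  have hneg : ∫ z in Iio 0, exp (-(x - z) ^ 2 / 4) * stepFun α β z
      = α * ∫ y in Iio (-x), exp (-y ^ 2 / 4) := by
    rw [← integral_const_mul, ← zero_sub, ← setIntegral_Iio_comp_sub_right _ 0 x]
    refine setIntegral_congr_fun measurableSet_Iio fun z (hz : z < 0) => ?_
    simp only [stepFun, if_pos hz]
    ring_nf
  have hpos : ∫ z in Ici 0, exp (-(x - z) ^ 2 / 4) * stepFun α β z
      = β * ∫ y in Iio x, exp (-y ^ 2 / 4) := by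
    rw [setIntegral_congr_set (Iio_ae_eq_Iic (a := x)), ← integral_const_mul, ← sub_zero x,
      ← setIntegral_Ici_comp_sub_left _ 0 x]
    refine setIntegral_congr_fun measurableSet_Ici fun z (hz : 0 ≤ z) => ?_
    simp only [stepFun, if_neg hz.not_gt, sub_zero]
    ring_nf
  rw [← integral_add_compl measurableSet_Iio hint, compl_Iio, hneg, hpos]

lemma abs_integral_sub_integral_stepFun_le {w : ℝ → ℝ} {B : ℝ} (hw : AEStronglyMeasurable w)
    (hB : ∀ z, |w z| ≤ B) (α β : ℝ) {x R : ℝ} (hx : |x| ≤ R) :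
    |(∫ z, exp (-(x - z) ^ 2 / 4) * w z) - ∫ z, exp (-(x - z) ^ 2 / 4) * stepFun α β z|
      ≤ exp (R ^ 2 / 4) * ∫ z, exp (-(1 / 8) * z ^ 2) * |w z - stepFun α β z| := by
  have hint : Integrable fun z => exp (-(x - z) ^ 2 / 4) * w z :=
    (integrable_exp_neg_sq_sub_div_four x).mul_bdd hw (Eventually.of_forall hB)
  have hint' : Integrable fun z => exp (-(x - z) ^ 2 / 4) * stepFun α β z :=
    (integrable_exp_neg_sq_sub_div_four x).mul_bdd (measurable_stepFun α β).aestronglyMeasurable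
      (Eventually.of_forall (abs_stepFun_le α β))
  rw [← integral_sub hint hint']
  simp only [← mul_sub]
  exact abs_integral_exp_neg_sq_sub_mul_le (hw.sub (measurable_stepFun α β).aestronglyMeasurable)
    (fun z => (abs_sub _ _).trans (add_le_add (hB z) (abs_stepFun_le α β z))) hx

lemma tendsto_integral_exp_mul_abs_comp_mul_sub_stepFun {f : ℝ → ℝ} {C : ℝ}
    (hmeas : Measurable f) (hbd : ∀ x, |f x| ≤ C) (hf : DifferentiableOn ℝ f {0}ᶜ)
    (hosc : Tendsto (fun x => |x * deriv f x|) (cocompact ℝ) (𝓝 0))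
    {lam : ℕ → ℝ} (hlam : Tendsto lam atTop atTop) {α β : ℝ}
    (hα : Tendsto (fun n => f (-(lam n))) atTop (𝓝 α))
    (hβ : Tendsto (fun n => f (lam n)) atTop (𝓝 β)) :
    Tendsto (fun n => ∫ z, exp (-(1 / 8) * z ^ 2) * |f (lam n * z) - stepFun α β z|)
      atTop (𝓝 0) := by
  refine tendsto_integral_mul_abs_of_tendsto_zero (integrable_exp_neg_mul_sq (by norm_num))
    (B := C + max |α| |β|) (fun n => ((hmeas.comp (measurable_const_mul _)).sub
      (measurable_stepFun α β)).aestronglyMeasurable)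
    (fun n z => (abs_sub _ _).trans (add_le_add (hbd _) (abs_stepFun_le α β z))) ?_
  filter_upwards [compl_mem_ae_iff.2 (measure_singleton 0)] with z hz
  simpa using (tendsto_comp_mul_stepFun hf hosc hlam hα hβ hz).sub_const (stepFun α β z)

theorem stmt_16_general (u₀ : ℝ → ℝ) (C : ℝ) (hbd : ∀ x, |u₀ x| ≤ C)
    (hC1 : ContDiffOn ℝ 1 u₀ {(0:ℝ)}ᶜ)
    (hosc : Tendsto (fun x => |x * deriv u₀ x|) (cocompact ℝ) (nhds 0))
    (u : ℝ → ℝ → ℝ)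
    (hu : ∀ x t, 0 < t →
      u x t = (1 / (2 * Real.sqrt (π * t))) * ∫ y : ℝ, Real.exp (-(x - y)^2 / (4 * t)) * u₀ y)
    (F : ℝ → ℝ) (hF : ∀ z, F z = (1 / (2 * Real.sqrt π)) * ∫ y in Iio z, Real.exp (-y^2 / 4))
    (α β : ℝ) (lam : ℕ → ℝ)
    (hlam : Tendsto lam atTop atTop)
    (hα : Tendsto (fun n => u₀ (-(lam n))) atTop (nhds α))
    (hβ : Tendsto (fun n => u₀ (lam n)) atTop (nhds β)) :
    ∀ K : Set ℝ, IsCompact K →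
      TendstoUniformlyOn
        (fun n x => u (Real.sqrt ((lam n)^2) * x) ((lam n)^2))
        (fun x => α * F (-x) + β * F x) atTop K := by
  intro K hK
  obtain ⟨R, hR⟩ := hK.isBounded.exists_norm_le
  have hd : DifferentiableOn ℝ u₀ {0}ᶜ := hC1.differentiableOn one_ne_zero
  have hmeas : Measurable u₀ := measurable_of_continuousOn_compl_singleton 0 hd.continuousOn
  have hI := (tendsto_integral_exp_mul_abs_comp_mul_sub_stepFun hmeas hbd hd hosc hlam hα hβ
    ).const_mul (1 / (2 * √π) * exp (R ^ 2 / 4))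
  rw [mul_zero] at hI
  refine tendstoUniformlyOn_of_eventually_dist_le hI ?_
  filter_upwards [hlam.eventually_gt_atTop 0] with n hn x hx
  have hlim : α * F (-x) + β * F x
      = 1 / (2 * √π) * ∫ z, exp (-(x - z) ^ 2 / 4) * stepFun α β z := by
    rw [hF, hF, integral_exp_neg_sq_sub_mul_stepFun]; ring
  rw [dist_comm, sqrt_sq hn.le, hu _ _ (by positivity), integral_heat_rescale u₀ hn, hlim,
    Real.dist_eq, ← mul_sub, abs_mul, abs_of_pos (by positivity), mul_assoc]
  gcongr
  exact abs_integral_sub_integral_stepFun_le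
    (hmeas.comp (measurable_const_mul _)).aestronglyMeasurable (fun z => hbd _) α β (hR x hx)

theorem stmt_16 (u₀ : ℝ → ℝ) (hmeas : Measurable u₀) (C : ℝ) (hbd : ∀ x, |u₀ x| ≤ C)
    (hC1 : ContDiffOn ℝ 1 u₀ {(0:ℝ)}ᶜ)
    (hosc : Tendsto (fun x => |x * deriv u₀ x|) (cocompact ℝ) (nhds 0))
    (u : ℝ → ℝ → ℝ)
    (hu : ∀ x t, 0 < t →
      u x t = (1 / (2 * Real.sqrt (π * t))) * ∫ y : ℝ, Real.exp (-(x - y)^2 / (4 * t)) * u₀ y)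
    (F : ℝ → ℝ) (hF : ∀ z, F z = (1 / (2 * Real.sqrt π)) * ∫ y in Iio z, Real.exp (-y^2 / 4))
    (α β : ℝ) (lam : ℕ → ℝ) (hlampos : ∀ n, 0 < lam n)
    (hlam : Tendsto lam atTop atTop)
    (hα : Tendsto (fun n => u₀ (-(lam n))) atTop (nhds α))
    (hβ : Tendsto (fun n => u₀ (lam n)) atTop (nhds β)) :
    ∀ K : Set ℝ, IsCompact K →
      TendstoUniformlyOn
        (fun n x => u (Real.sqrt ((lam n)^2) * x) ((lam n)^2))
        (fun x => α * F (-x) + β * F x) atTop K :=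
  stmt_16_general u₀ C hbd hC1 hosc u hu F hF α β lam hlam hα hβ
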